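/- arXiv:1503.05370 — 3 statements merged into one kernel-verified Lean document; each statement's English description precedes it below -/
import Mathlib

section
/- Let X hold, let the process be Markov with respect to its natural filtration, let q > 0 and assume ∫_{ℝ^d} |y|^q Q(y) dy < ∞. Then for all 0 ≤ r < s ≤ T and every x ∈ ℝ^d, E_x |X_s − X_r|^q ≤ C_T (s − r)^{q/α} ∫_{ℝ^d} Q(y) |y|^q dy. -/
/-!
Conditioning on `natFiltration X r` and using the Markov property on indicators identifies the
joint law of `(X r, X s)` with `law (X r) ⊗ p_{s-r}`. So it suffices to bound
`∫ p_t(z, w) ‖w - z‖^q dw` uniformly in `z`: by the bound on `p_t` and the substitution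
`u = t^(-1/α) • (z - w)`, whose Jacobian `t^(d/α)` cancels the prefactor `t^(-d/α)`, it is at most
`C t^(q/α) ∫ Q(u) ‖u‖^q du`.
-/

open MeasureTheory

def natFiltration {Ω : Type} [MeasurableSpace Ω] {d : ℕ}
    (X : ℝ → Ω → EuclideanSpace ℝ (Fin d)) (u : ℝ) : MeasurableSpace Ω :=
  ⨆ s ∈ Set.Iic u, MeasurableSpace.comap (X s) inferInstance

open ProbabilityTheory Function
open scoped ENNReal

theorem measurable_natFiltration {Ω : Type} [MeasurableSpace Ω] {d : ℕ}
    (X : ℝ → Ω → EuclideanSpace ℝ (Fin d)) (u : ℝ) : Measurable[natFiltration X u] (X u) :=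
  Measurable.of_comap_le <| le_iSup₂ (f := fun s (_ : s ∈ Set.Iic u) =>
    MeasurableSpace.comap (X s) inferInstance) u (Set.mem_Iic.2 le_rfl)

theorem natFiltration_le {Ω : Type} [mΩ : MeasurableSpace Ω] {d : ℕ}
    {X : ℝ → Ω → EuclideanSpace ℝ (Fin d)} (hX : ∀ s, Measurable (X s)) (u : ℝ) :
    natFiltration X u ≤ mΩ :=
  iSup₂_le fun s _ => (hX s).comap_le

theorem map_prodMk_eq_compProd_of_condExp {Ω α β : Type*} {m : MeasurableSpace Ω}
    [mΩ : MeasurableSpace Ω] [MeasurableSpace α] [MeasurableSpace β] {μ : Measure Ω}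
    [IsProbabilityMeasure μ] (hm : m ≤ mΩ) {Y : Ω → α} {Z : Ω → β} (hY : Measurable[m] Y)
    (hZ : Measurable Z) (κ : Kernel α β) [IsSFiniteKernel κ]
    (hcond : ∀ B, MeasurableSet B →
      μ[(Z ⁻¹' B).indicator 1 | m] =ᵐ[μ] fun ω => (κ (Y ω) B).toReal) :
    μ.map (fun ω => (Y ω, Z ω)) = (μ.map Y) ⊗ₘ κ := by
  have hYΩ : Measurable Y := hY.mono hm le_rfl
  -- `B = univ` forces `κ (Y ω)` to be a probability measure for a.e. `ω`
  have hmass : ∀ᵐ ω ∂μ, κ (Y ω) Set.univ = 1 := by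
    have h := hcond Set.univ MeasurableSet.univ
    rw [Set.preimage_univ, Set.indicator_univ, Pi.one_def, condExp_const hm] at h
    filter_upwards [h] with ω hω
    exact (ENNReal.toReal_eq_one_iff _).1 hω.symm
  have hle_one : ∀ᵐ ω ∂μ, ∀ B, κ (Y ω) B ≤ 1 :=
    hmass.mono fun ω h B => h ▸ measure_mono (Set.subset_univ B)
  refine Measure.ext_prod fun {A B} hA hB => ?_
  rw [Measure.map_apply (hYΩ.prodMk hZ) (hA.prod hB), Set.mk_preimage_prod,
    Measure.compProd_apply_prod hA hB, setLIntegral_map hA (κ.measurable_coe hB) hYΩ]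
  have hlint_ne_top : ∫⁻ ω in Y ⁻¹' A, κ (Y ω) B ∂μ ≠ ∞ :=
    ne_top_of_le_ne_top (measure_ne_top μ (Y ⁻¹' A)) <| by
      simpa using lintegral_mono_ae (ae_restrict_of_ae (hle_one.mono fun ω h => h B))
  refine (ENNReal.toReal_eq_toReal_iff' (measure_ne_top _ _) hlint_ne_top).1 ?_
  calc (μ (Y ⁻¹' A ∩ Z ⁻¹' B)).toReal
      = ∫ ω in Y ⁻¹' A, (Z ⁻¹' B).indicator 1 ω ∂μ := by
        rw [integral_indicator_one (hZ hB), Measure.real, Measure.restrict_apply (hZ hB),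
          Set.inter_comm]
    _ = ∫ ω in Y ⁻¹' A, μ[(Z ⁻¹' B).indicator 1 | m] ω ∂μ :=
        (setIntegral_condExp hm ((integrable_const 1).indicator (hZ hB)) (hY hA)).symm
    _ = ∫ ω in Y ⁻¹' A, (κ (Y ω) B).toReal ∂μ := integral_congr_ae (ae_restrict_of_ae (hcond B hB))
    _ = (∫⁻ ω in Y ⁻¹' A, κ (Y ω) B ∂μ).toReal :=
        integral_toReal ((κ.measurable_coe hB).comp hYΩ).aemeasurable
          (ae_restrict_of_ae (hle_one.mono fun ω h => (h B).trans_lt ENNReal.one_lt_top))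

theorem integral_norm_sub_rpow_le_of_map_eq_compProd {Ω E : Type*} [MeasurableSpace Ω]
    [NormedAddCommGroup E] [MeasurableSpace E] [BorelSpace E] [SecondCountableTopology E]
    {μ : Measure Ω} [IsProbabilityMeasure μ] {Y Z : Ω → E} (hY : Measurable Y) (hZ : Measurable Z)
    {κ : Kernel E E} [IsSFiniteKernel κ] (hlaw : μ.map (fun ω => (Y ω, Z ω)) = (μ.map Y) ⊗ₘ κ)
    {q M : ℝ} (hM : 0 ≤ M) (hκ : ∀ z, ∫⁻ w, ENNReal.ofReal (‖w - z‖ ^ q) ∂κ z ≤ ENNReal.ofReal M) :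
    ∫ ω, ‖Z ω - Y ω‖ ^ q ∂μ ≤ M := by
  have : IsProbabilityMeasure (μ.map Y) := Measure.isProbabilityMeasure_map hY.aemeasurable
  have hf : Measurable fun x : E × E => ENNReal.ofReal (‖x.2 - x.1‖ ^ q) :=
    ((measurable_snd.sub measurable_fst).norm.pow_const q).ennreal_ofReal
  rw [integral_eq_lintegral_of_nonneg_ae (ae_of_all _ fun ω => by positivity)
    (f := fun ω => ‖Z ω - Y ω‖ ^ q) ((hZ.sub hY).norm.pow_const q).aestronglyMeasurable]
  refine ENNReal.toReal_le_of_le_ofReal hM ?_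
  calc ∫⁻ ω, ENNReal.ofReal (‖Z ω - Y ω‖ ^ q) ∂μ
      = ∫⁻ x, ENNReal.ofReal (‖x.2 - x.1‖ ^ q) ∂μ.map (fun ω => (Y ω, Z ω)) :=
        (lintegral_map hf (hY.prodMk hZ)).symm
    _ = ∫⁻ z, ∫⁻ w, ENNReal.ofReal (‖w - z‖ ^ q) ∂κ z ∂μ.map Y := by
        rw [hlaw, Measure.lintegral_compProd hf]
    _ ≤ ∫⁻ _, ENNReal.ofReal M ∂μ.map Y := lintegral_mono hκ
    _ = ENNReal.ofReal M := by rw [lintegral_const, measure_univ, mul_one]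

section DensityKernel

variable {α β : Type*} [MeasurableSpace α] [MeasurableSpace β]

noncomputable def densityKernel (ν : Measure β) [SFinite ν] (p : α → β → ℝ) : Kernel α β :=
  Kernel.withDensity (Kernel.const α ν) fun a b => ENNReal.ofReal (p a b)

variable (ν : Measure β) [SFinite ν] {p : α → β → ℝ}

instance : IsSFiniteKernel (densityKernel ν p) :=
  Kernel.IsSFiniteKernel.withDensity _ fun _ _ => ENNReal.ofReal_ne_top

theorem densityKernel_apply (hp : Measurable (uncurry p)) (a : α) :
    densityKernel ν p a = ν.withDensity fun b => ENNReal.ofReal (p a b) := by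
  rw [densityKernel, Kernel.withDensity_apply _ (by fun_prop), Kernel.const_apply]

theorem integral_mul_indicator_one_eq_densityKernel (hp : Measurable (uncurry p)) {a : α}
    (hpa : ∀ b, 0 ≤ p a b) {B : Set β} (hB : MeasurableSet B) :
    ∫ b, p a b * B.indicator 1 b ∂ν = (densityKernel ν p a B).toReal := by
  have hmeas : Measurable (p a) := hp.comp measurable_prodMk_left
  simp_rw [← Set.indicator_mul_right, Pi.one_apply, mul_one]
  rw [integral_indicator hB, integral_eq_lintegral_of_nonneg_ae (ae_of_all _ hpa)
    hmeas.aestronglyMeasurable, densityKernel_apply ν hp, withDensity_apply _ hB]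

end DensityKernel

section HaarScaling

variable {E : Type*} [NormedAddCommGroup E] [NormedSpace ℝ E] [MeasurableSpace E] [BorelSpace E]
  [FiniteDimensional ℝ E] (μ : Measure E) [μ.IsAddHaarMeasure]

theorem lintegral_comp_smul_sub_mul_norm_rpow {f : E → ℝ≥0∞} (hf : Measurable f) {c : ℝ}
    (hc : 0 < c) (z : E) (q : ℝ) :
    ∫⁻ w, f (c • (z - w)) * ENNReal.ofReal (‖w - z‖ ^ q) ∂μ
      = ENNReal.ofReal (c ^ (-(Module.finrank ℝ E + q)))
          * ∫⁻ u, f u * ENNReal.ofReal (‖u‖ ^ q) ∂μ := by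
  set g : E → ℝ≥0∞ := fun u => f u * ENNReal.ofReal (‖u‖ ^ q)
  have hg : Measurable g := hf.mul (by fun_prop)
  have hscale : ∀ u : E, f (c • u) * ENNReal.ofReal (‖u‖ ^ q)
      = ENNReal.ofReal (c ^ (-q)) * g (c • u) := by
    intro u
    rw [mul_left_comm, ← ENNReal.ofReal_mul (by positivity), norm_smul, Real.norm_of_nonneg hc.le,
      Real.mul_rpow hc.le (norm_nonneg u), ← mul_assoc, ← Real.rpow_add hc, neg_add_cancel,
      Real.rpow_zero, one_mul]
  have hdet : |(c ^ Module.finrank ℝ E)⁻¹| = c ^ (-(Module.finrank ℝ E : ℝ)) := by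
    rw [abs_of_pos (by positivity), Real.rpow_neg hc.le, Real.rpow_natCast]
  calc ∫⁻ w, f (c • (z - w)) * ENNReal.ofReal (‖w - z‖ ^ q) ∂μ
      = ∫⁻ u, f (c • u) * ENNReal.ofReal (‖u‖ ^ q) ∂μ := by
        simp_rw [← norm_neg (_ - z), neg_sub]
        exact lintegral_sub_left_eq_self (fun u => f (c • u) * ENNReal.ofReal (‖u‖ ^ q)) z
    _ = ENNReal.ofReal (c ^ (-q)) * ∫⁻ u, g u ∂μ.map (c • ·) := by
        rw [lintegral_map hg (measurable_const_smul c), ← lintegral_const_mul _ (by fun_prop)]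
        simp_rw [hscale]
    _ = _ := by
        rw [Measure.map_addHaar_smul μ hc.ne', lintegral_smul_measure, smul_eq_mul, hdet,
          ← mul_assoc, ← ENNReal.ofReal_mul (by positivity), ← Real.rpow_add hc, neg_add, add_comm]

theorem lintegral_norm_sub_rpow_densityKernel_le {p : E → E → ℝ} (hp : Measurable (uncurry p))
    {Q : E → ℝ} (hQ : Measurable Q) (hQnn : ∀ y, 0 ≤ Q y) {C t α : ℝ} (ht : 0 < t)
    (hpQ : ∀ z w, p z w ≤ C * t ^ (-(Module.finrank ℝ E : ℝ) / α) * Q (t ^ (-1 / α) • (z - w)))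
    (z : E) (q : ℝ) :
    ∫⁻ w, ENNReal.ofReal (‖w - z‖ ^ q) ∂densityKernel μ p z
      ≤ ENNReal.ofReal (C * t ^ (q / α)) * ∫⁻ u, ENNReal.ofReal (Q u * ‖u‖ ^ q) ∂μ := by
  set n : ℝ := (Module.finrank ℝ E : ℝ)
  rw [densityKernel_apply μ hp, lintegral_withDensity_eq_lintegral_mul _ (by fun_prop) (by fun_prop)]
  calc ∫⁻ w, ENNReal.ofReal (p z w) * ENNReal.ofReal (‖w - z‖ ^ q) ∂μ
      ≤ ∫⁻ w, ENNReal.ofReal (C * t ^ (-n / α))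
          * (ENNReal.ofReal (Q (t ^ (-1 / α) • (z - w))) * ENNReal.ofReal (‖w - z‖ ^ q)) ∂μ := by
        refine lintegral_mono fun w => ?_
        rw [← mul_assoc, ← ENNReal.ofReal_mul' (hQnn _)]
        gcongr
        exact hpQ z w
    _ = ENNReal.ofReal (C * t ^ (-n / α)) * (ENNReal.ofReal ((t ^ (-1 / α)) ^ (-(n + q)))
          * ∫⁻ u, ENNReal.ofReal (Q u) * ENNReal.ofReal (‖u‖ ^ q) ∂μ) := by
        rw [lintegral_const_mul _ (by fun_prop),
          lintegral_comp_smul_sub_mul_norm_rpow μ (f := fun u => ENNReal.ofReal (Q u)) (by fun_prop)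
            (by positivity)]
    _ = ENNReal.ofReal (C * t ^ (q / α)) * ∫⁻ u, ENNReal.ofReal (Q u * ‖u‖ ^ q) ∂μ := by
        rw [← mul_assoc, ← ENNReal.ofReal_mul' (by positivity), ← Real.rpow_mul ht.le, mul_assoc,
          ← Real.rpow_add ht]
        simp_rw [ENNReal.ofReal_mul' (Real.rpow_nonneg (norm_nonneg _) q)]
        ring_nf

end HaarScaling

theorem statement_6_general
    {d : ℕ} {Ω : Type} [MeasurableSpace Ω]
    (X : ℝ → Ω → EuclideanSpace ℝ (Fin d))
    (P : EuclideanSpace ℝ (Fin d) → Measure Ω)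
    (hP : ∀ x, IsProbabilityMeasure (P x))
    (hXmeas : Measurable (Function.uncurry X))
    (T Cst α : ℝ) (hCst : 0 < Cst)
    (Q : EuclideanSpace ℝ (Fin d) → ℝ)
    (hQmeas : Measurable Q) (hQnn : ∀ y, 0 ≤ Q y)
    (pt : ℝ → EuclideanSpace ℝ (Fin d) → EuclideanSpace ℝ (Fin d) → ℝ)
    (hptmeas : Measurable (fun q : ℝ × EuclideanSpace ℝ (Fin d) × EuclideanSpace ℝ (Fin d) => pt q.1 q.2.1 q.2.2))
    (hptnn : ∀ t x y, 0 < t → 0 ≤ pt t x y)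
    (hptbound : ∀ x y t, 0 < t → t ≤ T →
      pt t x y ≤ Cst * t ^ (-(d:ℝ)/α) * Q ((t ^ (-1/α)) • (x - y)))
    (hMarkov : ∀ (x : EuclideanSpace ℝ (Fin d)) (u v : ℝ),
      ∀ g : EuclideanSpace ℝ (Fin d) → ℝ, Measurable g → (∃ M, ∀ y, |g y| ≤ M) →
      0 ≤ u → 0 < v →
      (P x)[(fun ω => g (X (u + v) ω)) | natFiltration X u]
        =ᵐ[P x] (fun ω => ∫ y, pt v (X u ω) y * g y))
    (q : ℝ)
    (hQq : Integrable (fun y : EuclideanSpace ℝ (Fin d) => Q y * ‖y‖ ^ q)) :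
    ∀ (x : EuclideanSpace ℝ (Fin d)) (r s : ℝ), 0 ≤ r → r < s → s ≤ T →
      (∫ ω, ‖X s ω - X r ω‖ ^ q ∂ P x)
        ≤ Cst * (s - r) ^ (q / α) * ∫ y, Q y * ‖y‖ ^ q := by
  intro x r s hr hrs hsT
  have ht : 0 < s - r := sub_pos.2 hrs
  have hX : ∀ u, Measurable (X u) := fun u => hXmeas.comp measurable_prodMk_left
  have hpt : Measurable (uncurry (pt (s - r))) := hptmeas.comp (measurable_const.prodMk measurable_id)
  have hlaw : (P x).map (fun ω => (X r ω, X s ω))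
      = ((P x).map (X r)) ⊗ₘ densityKernel volume (pt (s - r)) := by
    refine map_prodMk_eq_compProd_of_condExp (natFiltration_le hX r)
      (measurable_natFiltration X r) (hX s) _ fun B hB => ?_
    have h := hMarkov x r (s - r) (B.indicator 1) (measurable_const.indicator hB)
      ⟨1, fun y => by by_cases hy : y ∈ B <;> simp [hy]⟩ hr ht
    rw [add_sub_cancel] at h
    exact h.trans (ae_of_all _ fun ω =>
      integral_mul_indicator_one_eq_densityKernel volume hpt (fun y => hptnn _ _ y ht) hB)
  have hQqnn : ∀ y, 0 ≤ Q y * ‖y‖ ^ q := fun y => mul_nonneg (hQnn y) (by positivity)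
  have hI : 0 ≤ ∫ y, Q y * ‖y‖ ^ q := integral_nonneg hQqnn
  refine integral_norm_sub_rpow_le_of_map_eq_compProd (μ := P x) (hX r) (hX s) hlaw
    (by positivity) fun z => ?_
  rw [ENNReal.ofReal_mul (by positivity), ofReal_integral_eq_lintegral_ofReal hQq (ae_of_all _ hQqnn)]
  refine lintegral_norm_sub_rpow_densityKernel_le volume hpt hQmeas hQnn ht (fun z w => ?_) z q
  rw [finrank_euclideanSpace_fin]
  exact hptbound z w _ ht (by linarith)

theorem statement_6
    {d : ℕ} {Ω : Type} [MeasurableSpace Ω]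
    (X : ℝ → Ω → EuclideanSpace ℝ (Fin d))
    (P : EuclideanSpace ℝ (Fin d) → Measure Ω)
    (hP : ∀ x, IsProbabilityMeasure (P x))
    (hXmeas : Measurable (Function.uncurry X))
    (hX0 : ∀ x, ∀ᵐ ω ∂ P x, X 0 ω = x)
    (T Cst α : ℝ) (hT : 0 < T) (hCst : 0 < Cst) (hα : α ∈ Set.Ioc (0:ℝ) 2)
    (Q : EuclideanSpace ℝ (Fin d) → ℝ)
    (hQmeas : Measurable Q) (hQnn : ∀ y, 0 ≤ Q y) (hQone : (∫ y, Q y) = 1)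
    (pt pt' : ℝ → EuclideanSpace ℝ (Fin d) → EuclideanSpace ℝ (Fin d) → ℝ)
    (hptmeas : Measurable (fun q : ℝ × EuclideanSpace ℝ (Fin d) × EuclideanSpace ℝ (Fin d) => pt q.1 q.2.1 q.2.2))
    (hpt'meas : Measurable (fun q : ℝ × EuclideanSpace ℝ (Fin d) × EuclideanSpace ℝ (Fin d) => pt' q.1 q.2.1 q.2.2))
    (hptnn : ∀ t x y, 0 < t → 0 ≤ pt t x y)
    (hptderiv : ∀ x y t, 0 < t → HasDerivAt (fun s => pt s x y) (pt' t x y) t)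
    (hptbound : ∀ x y t, 0 < t → t ≤ T →
      pt t x y ≤ Cst * t ^ (-(d:ℝ)/α) * Q ((t ^ (-1/α)) • (x - y)))
    (hpt'bound : ∀ x y t, 0 < t → t ≤ T →
      |pt' t x y| ≤ Cst * t ^ (-1 - (d:ℝ)/α) * Q ((t ^ (-1/α)) • (x - y)))
    (hdens : ∀ x t, 0 < t →
      Measure.map (X t) (P x)
        = (volume : Measure (EuclideanSpace ℝ (Fin d))).withDensity
            (fun y => ENNReal.ofReal (pt t x y)))
    (hMarkov : ∀ (x : EuclideanSpace ℝ (Fin d)) (u v : ℝ),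
      ∀ g : EuclideanSpace ℝ (Fin d) → ℝ, Measurable g → (∃ M, ∀ y, |g y| ≤ M) →
      0 ≤ u → 0 < v →
      (P x)[(fun ω => g (X (u + v) ω)) | natFiltration X u]
        =ᵐ[P x] (fun ω => ∫ y, pt v (X u ω) y * g y))
    (q : ℝ) (hq : 0 < q)
    (hQq : Integrable (fun y : EuclideanSpace ℝ (Fin d) => Q y * ‖y‖ ^ q)) :
    ∀ (x : EuclideanSpace ℝ (Fin d)) (r s : ℝ), 0 ≤ r → r < s → s ≤ T →
      (∫ ω, ‖X s ω - X r ω‖ ^ q ∂ P x)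
        ≤ Cst * (s - r) ^ (q / α) * ∫ y, Q y * ‖y‖ ^ q :=
  statement_6_general X P hP hXmeas T Cst α hCst Q hQmeas hQnn pt hptmeas hptnn hptbound hMarkov q
    hQq
end

section
/- Let T > 0, let δ : [0,T] → ℝ be integrable, and set f(t) = ∫_0^t δ(u) du for t ∈ [0,T]. Then for every real p ≥ 2, |f(T)|^p = p(p−1) ∫_0^T |f(s)|^{p−2} δ(s) ( ∫_s^T δ(t) dt ) ds. -/
/-!
Write `f s = ∫ u in a..s, δ u`; it is absolutely continuous with `f' = δ` almost everywhere, so the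
chain rule holds for `g ∘ f` whenever `g` is `C¹`. Applied to `|y| ^ p` and to `|y| ^ (p - 2) * y`
(derivatives `p * |y| ^ (p - 2) * y` and `(p - 1) * |y| ^ (p - 2)`) it gives
`p * ∫ |f| ^ (p - 2) * f * δ = |f b| ^ p` and
`(p - 1) * ∫ |f| ^ (p - 2) * δ = |f b| ^ (p - 2) * f b`.
Since `∫ t in s..b, δ t = f b - f s`, the right-hand side is
`p * f b * (|f b| ^ (p - 2) * f b) - (p - 1) * |f b| ^ p = |f b| ^ p`.
-/

open MeasureTheory Set Filter Topology

theorem LipschitzOnWith.comp_absolutelyContinuousOnInterval {X Y : Type*}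
    [PseudoMetricSpace X] [PseudoMetricSpace Y] {g : X → Y} {K : NNReal} {s : Set X}
    {f : ℝ → X} {a b : ℝ} (hg : LipschitzOnWith K g s) (hfs : MapsTo f (uIcc a b) s)
    (hf : AbsolutelyContinuousOnInterval f a b) :
    AbsolutelyContinuousOnInterval (g ∘ f) a b := by
  have hK := Tendsto.const_mul (K : ℝ) hf
  rw [mul_zero] at hK
  refine squeeze_zero' (.of_forall fun _ ↦ Finset.sum_nonneg fun _ _ ↦ dist_nonneg) ?_ hK
  refine eventually_inf_principal.2 (.of_forall fun E hE ↦ ?_)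
  rw [Finset.mul_sum]
  exact Finset.sum_le_sum fun i hi ↦
    hg.dist_le_mul _ (hfs (hE.1 i hi).1) _ (hfs (hE.1 i hi).2)

theorem AbsolutelyContinuousOnInterval.comp_contDiff {f g : ℝ → ℝ} {a b : ℝ}
    (hg : ContDiff ℝ 1 g) (hf : AbsolutelyContinuousOnInterval f a b) :
    AbsolutelyContinuousOnInterval (g ∘ f) a b := by
  obtain ⟨K, hK⟩ := hg.locallyLipschitz.locallyLipschitzOn.exists_lipschitzOnWith_of_compact
    (isCompact_uIcc.image_of_continuousOn hf.continuousOn)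
  exact hK.comp_absolutelyContinuousOnInterval (mapsTo_image f _) hf

theorem AbsolutelyContinuousOnInterval.integral_deriv_comp_mul_deriv {f g g' : ℝ → ℝ} {a b : ℝ}
    (hf : AbsolutelyContinuousOnInterval f a b) (hg : ∀ y, HasDerivAt g (g' y) y)
    (hg' : Continuous g') :
    ∫ x in a..b, g' (f x) * deriv f x = g (f b) - g (f a) := by
  have hgC : ContDiff ℝ 1 g :=
    contDiff_one_iff_deriv.2 ⟨fun y ↦ (hg y).differentiableAt, by
      simpa only [funext fun y ↦ (hg y).deriv] using hg'⟩
  rw [← Function.comp_apply (f := g), ← Function.comp_apply (f := g) (x := a),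
    ← (hf.comp_contDiff hgC).integral_deriv_eq_sub]
  refine intervalIntegral.integral_congr_ae ?_
  filter_upwards [hf.ae_differentiableAt] with x hx hxab
  exact (((hg (f x)).comp x (hx (uIoc_subset_uIcc hxab)).hasDerivAt).deriv).symm

theorem IntervalIntegrable.integral_deriv_comp_primitive_mul {δ g g' : ℝ → ℝ} {a b : ℝ}
    (hδ : IntervalIntegrable δ volume a b) (hg : ∀ y, HasDerivAt g (g' y) y)
    (hg' : Continuous g') :
    ∫ x in a..b, g' (∫ t in a..x, δ t) * δ x = g (∫ t in a..b, δ t) - g 0 := by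
  have hf := hδ.absolutelyContinuousOnInterval_intervalIntegral (c := a) left_mem_uIcc
  have := hf.integral_deriv_comp_mul_deriv hg hg'
  simp only [intervalIntegral.integral_same] at this
  rw [← this]
  refine intervalIntegral.integral_congr_ae ?_
  filter_upwards [hδ.ae_hasDerivAt_integral] with x hx hxab
  rw [(hx (uIoc_subset_uIcc hxab) a left_mem_uIcc).deriv]

theorem hasDerivAt_abs_rpow_mul_self {r : ℝ} (hr : 0 ≤ r) (x : ℝ) :
    HasDerivAt (fun y : ℝ ↦ |y| ^ r * y) ((r + 1) * |x| ^ r) x := by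
  rcases hr.eq_or_lt with rfl | hr
  · simpa using hasDerivAt_id' x
  rcases eq_or_ne x 0 with rfl | hx
  · rw [hasDerivAt_iff_isLittleO_nhds_zero]
    simp only [abs_zero, Real.zero_rpow hr.ne', mul_zero, zero_add, sub_zero, smul_eq_mul]
    have h : (fun y : ℝ ↦ |y| ^ r) =o[𝓝 0] (fun _ ↦ (1 : ℝ)) := by
      refine Asymptotics.isLittleO_one_iff ℝ |>.2 ?_
      simpa [Real.zero_rpow hr.ne'] using
        (continuous_abs.rpow_const fun _ ↦ Or.inr hr.le).tendsto 0
    simpa using h.mul_isBigO (Asymptotics.isBigO_refl (fun y : ℝ ↦ y) _)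
  · have hx' : |x| ≠ 0 := abs_ne_zero.2 hx
    refine (((hasDerivAt_abs hx).rpow_const (p := r) (Or.inl hx')).mul
      (hasDerivAt_id' x)).congr_deriv ?_
    calc _ = r * (|x| ^ (r - 1) * ((SignType.sign x : ℝ) * x)) + |x| ^ r := by ring
      _ = _ := by rw [sign_mul_self, ← Real.rpow_add_one hx', sub_add_cancel]; ring

theorem abs_rpow_sub_two_mul_self_mul_self {p : ℝ} (hp : p ≠ 0) (x : ℝ) :
    |x| ^ (p - 2) * x * x = |x| ^ p := by
  rw [mul_assoc, ← abs_mul_abs_self, ← sq, ← Real.rpow_two,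
    ← Real.rpow_add' (abs_nonneg x) (by simpa using hp), sub_add_cancel]

theorem abs_intervalIntegral_rpow_eq {δ : ℝ → ℝ} {a b p : ℝ}
    (hδ : IntervalIntegrable δ volume a b) (hp : 2 ≤ p) :
    |∫ u in a..b, δ u| ^ p
      = p * (p - 1) * ∫ s in a..b, |∫ u in a..s, δ u| ^ (p - 2) * δ s * ∫ t in s..b, δ t := by
  have hpow := hδ.integral_deriv_comp_primitive_mul (fun y ↦ hasDerivAt_abs_rpow y (by linarith))
    (by fun_prop (disch := linarith))
  have hφ := hδ.integral_deriv_comp_primitive_mul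
    (hasDerivAt_abs_rpow_mul_self (by linarith : 0 ≤ p - 2)) (by fun_prop (disch := linarith))
  set f : ℝ → ℝ := fun s ↦ ∫ u in a..s, δ u
  have hf : ContinuousOn f (uIcc a b) :=
    (hδ.absolutelyContinuousOnInterval_intervalIntegral left_mem_uIcc).continuousOn
  have hint : ∀ s ∈ uIcc a b, ∫ t in s..b, δ t = f b - f s := fun s hs ↦
    (intervalIntegral.integral_interval_sub_left hδ (hδ.mono_set (uIcc_subset_uIcc_left hs))).symm
  simp only [abs_zero, Real.zero_rpow (by linarith : p ≠ 0), mul_zero, sub_zero] at hpow hφ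
  have hI₁ : IntervalIntegrable (fun s ↦ (p - 2 + 1) * |f s| ^ (p - 2) * δ s) volume a b :=
    hδ.continuousOn_mul (by fun_prop (disch := linarith))
  have hI₂ : IntervalIntegrable (fun s ↦ p * |f s| ^ (p - 2) * f s * δ s) volume a b :=
    hδ.continuousOn_mul (by fun_prop (disch := linarith))
  calc |f b| ^ p = p * f b * (|f b| ^ (p - 2) * f b) - (p - 1) * |f b| ^ p := by
        rw [← abs_rpow_sub_two_mul_self_mul_self (by linarith : p ≠ 0)]; ring
    _ = ∫ s in a..b, p * f b * ((p - 2 + 1) * |f s| ^ (p - 2) * δ s)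
          - (p - 1) * (p * |f s| ^ (p - 2) * f s * δ s) := by
        rw [intervalIntegral.integral_sub (hI₁.const_mul (p * f b)) (hI₂.const_mul (p - 1)),
          intervalIntegral.integral_const_mul, intervalIntegral.integral_const_mul, hpow, hφ]
    _ = p * (p - 1) * ∫ s in a..b, |f s| ^ (p - 2) * δ s * ∫ t in s..b, δ t := by
        rw [← intervalIntegral.integral_const_mul (p * (p - 1))]
        refine intervalIntegral.integral_congr fun s hs ↦ ?_
        simp only [hint s hs]
        ring

theorem statement_8
    (T : ℝ) (hT : 0 < T) (δ : ℝ → ℝ)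
    (hδ : IntegrableOn δ (Set.Icc 0 T))
    (p : ℝ) (hp : 2 ≤ p) :
    |∫ u in (0:ℝ)..T, δ u| ^ p
      = p * (p - 1) * ∫ s in (0:ℝ)..T,
          |∫ u in (0:ℝ)..s, δ u| ^ (p - 2) * δ s * ∫ t in s..T, δ t :=
  abs_intervalIntegral_rpow_eq ((intervalIntegrable_iff_integrableOn_Icc_of_le hT.le).2 hδ) hp
end

section
/- Let X and H1 hold, let the process be Markov with respect to its natural filtration, and let p ≥ 2 satisfy ∫_{ℝ^d} V^p(T^{1/α}|y|) Q(y) dy < ∞. Then for all 0 ≤ r ≤ s ≤ t ≤ T and every x ∈ ℝ^d, E_x [ |h(X_s) − h(X_r)|^{p/2} |h(X_t) − h(X_r)|^{p/2} ] ≤ 2^{p−1} ‖h‖_V^p V^p(|x|) · max{ 1, C_T ∫_{ℝ^d} Q(y) V^p(T^{1/α}|y|) dy } · 2. -/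
/-!
By AM–GM and `(a + b)^p ≤ 2^(p-1) (a^p + b^p)`, the integrand is at most
`2^(p-1) ((|h(X_s)|^p + |h(X_t)|^p) / 2 + |h(X_r)|^p)`, so it suffices to bound each moment
`E_x |h(X_u)|^p`, `0 ≤ u ≤ T`, by `‖h‖_V^p V(|x|)^p max {1, C_T ∫ Q V^p(T^{1/α} |·|)}`.
At `u = 0` this is the growth bound on `h`. For `u > 0` put `c = u^{-1/α}`, so that
`p_u(x, y) ≤ C_T c^d Q(c (x - y))`; submultiplicativity gives
`V(|y|) ≤ V(|x|) V(|y - x|) ≤ V(|x|) V(T^{1/α} |c (x - y)|)` because `|y - x| = c⁻¹ |c (x - y)|`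
and `c⁻¹ = u^{1/α} ≤ T^{1/α}`, and the substitution `z = c (x - y)` absorbs the factor `c^d`.
-/

open MeasureTheory Module

lemma Real.rpow_add_le_mul_rpow_add_rpow {a b p : ℝ} (ha : 0 ≤ a) (hb : 0 ≤ b) (hp : 1 ≤ p) :
    (a + b) ^ p ≤ 2 ^ (p - 1) * (a ^ p + b ^ p) := by
  have := NNReal.coe_le_coe.2 (NNReal.rpow_add_le_mul_rpow_add_rpow ⟨a, ha⟩ ⟨b, hb⟩ hp)
  push_cast [NNReal.coe_rpow] at this
  exact this

lemma Real.rpow_half_mul_rpow_half_le {a b p : ℝ} (ha : 0 ≤ a) (hb : 0 ≤ b) :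
    a ^ (p / 2) * b ^ (p / 2) ≤ (a ^ p + b ^ p) / 2 := by
  have := Real.geom_mean_le_arith_mean2_weighted (w₁ := 1 / 2) (w₂ := 1 / 2) (by norm_num)
    (by norm_num) (Real.rpow_nonneg ha p) (Real.rpow_nonneg hb p) (by norm_num)
  rw [← Real.rpow_mul ha, ← Real.rpow_mul hb, mul_one_div] at this
  linarith

lemma abs_sub_rpow_half_mul_le {a b c p : ℝ} (hp : 1 ≤ p) :
    |a - c| ^ (p / 2) * |b - c| ^ (p / 2) ≤ 2 ^ (p - 1) * ((|a| ^ p + |b| ^ p) / 2 + |c| ^ p) := by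
  have hsub (a : ℝ) : |a - c| ^ p ≤ 2 ^ (p - 1) * (|a| ^ p + |c| ^ p) :=
    (Real.rpow_le_rpow (abs_nonneg _) (abs_sub _ _) (by linarith)).trans
      (Real.rpow_add_le_mul_rpow_add_rpow (abs_nonneg _) (abs_nonneg _) hp)
  calc |a - c| ^ (p / 2) * |b - c| ^ (p / 2) ≤ (|a - c| ^ p + |b - c| ^ p) / 2 :=
        Real.rpow_half_mul_rpow_half_le (abs_nonneg _) (abs_nonneg _)
    _ ≤ (2 ^ (p - 1) * (|a| ^ p + |c| ^ p) + 2 ^ (p - 1) * (|b| ^ p + |c| ^ p)) / 2 := by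
        gcongr <;> apply hsub
    _ = 2 ^ (p - 1) * ((|a| ^ p + |b| ^ p) / 2 + |c| ^ p) := by ring

theorem integral_abs_sub_rpow_half_mul_le {Ω : Type*} [MeasurableSpace Ω] {μ : Measure Ω}
    {f g k : Ω → ℝ} {p A : ℝ} (hp : 1 ≤ p) (hf : Integrable (fun ω => |f ω| ^ p) μ)
    (hg : Integrable (fun ω => |g ω| ^ p) μ) (hk : Integrable (fun ω => |k ω| ^ p) μ)
    (hfA : ∫ ω, |f ω| ^ p ∂μ ≤ A) (hgA : ∫ ω, |g ω| ^ p ∂μ ≤ A) (hkA : ∫ ω, |k ω| ^ p ∂μ ≤ A) :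
    ∫ ω, |f ω - k ω| ^ (p / 2) * |g ω - k ω| ^ (p / 2) ∂μ ≤ 2 ^ (p - 1) * A * 2 := by
  have hfg : Integrable (fun ω => (|f ω| ^ p + |g ω| ^ p) / 2) μ := (hf.add hg).div_const 2
  calc ∫ ω, |f ω - k ω| ^ (p / 2) * |g ω - k ω| ^ (p / 2) ∂μ
      ≤ ∫ ω, 2 ^ (p - 1) * ((|f ω| ^ p + |g ω| ^ p) / 2 + |k ω| ^ p) ∂μ :=
        integral_mono_of_nonneg (ae_of_all _ fun ω => by positivity)
          ((hfg.add hk).const_mul _) (ae_of_all _ fun ω => abs_sub_rpow_half_mul_le hp)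
    _ = 2 ^ (p - 1) * ((∫ ω, |f ω| ^ p ∂μ + ∫ ω, |g ω| ^ p ∂μ) / 2 + ∫ ω, |k ω| ^ p ∂μ) := by
        rw [integral_const_mul, integral_add hfg hk, integral_div, integral_add hf hg]
    _ ≤ 2 ^ (p - 1) * ((A + A) / 2 + A) := by gcongr
    _ = 2 ^ (p - 1) * A * 2 := by ring

section HaarScaling

variable {E : Type*} [NormedAddCommGroup E] [NormedSpace ℝ E] [MeasurableSpace E] [BorelSpace E]
  [FiniteDimensional ℝ E] {μ : Measure E} [μ.IsAddHaarMeasure] [μ.IsNegInvariant]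

lemma MeasureTheory.Integrable.comp_smul_sub {g : E → ℝ} (hg : Integrable g μ) {c : ℝ} (hc : c ≠ 0)
    (x : E) :
    Integrable (fun y => g (c • (x - y))) μ :=
  (hg.comp_smul hc).comp_sub_left x

lemma integral_pow_finrank_mul_comp_smul_sub (g : E → ℝ) {c : ℝ} (hc : 0 < c) (x : E) :
    ∫ y, c ^ finrank ℝ E * g (c • (x - y)) ∂μ = ∫ z, g z ∂μ := by
  rw [integral_const_mul, integral_sub_left_eq_self (fun w => g (c • w)) μ x,
    Measure.integral_comp_smul_of_nonneg μ g c (hR := hc.le), smul_eq_mul,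
    mul_inv_cancel_left₀ (pow_ne_zero _ hc.ne')]

end HaarScaling

section ScaledKernel

variable {E : Type*} [NormedAddCommGroup E] [NormedSpace ℝ E] {V : ℝ → ℝ}

lemma weight_norm_le_mul_weight_norm_smul_sub (hV0 : ∀ r, 0 ≤ r → 0 ≤ V r)
    (hVmono : ∀ r₁ r₂, 0 ≤ r₁ → r₁ ≤ r₂ → V r₁ ≤ V r₂)
    (hVsub : ∀ r₁ r₂, 0 ≤ r₁ → 0 ≤ r₂ → V (r₁ + r₂) ≤ V r₁ * V r₂)
    {c S : ℝ} (hc : 0 < c) (hcS : c⁻¹ ≤ S) (x y : E) :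
    V ‖y‖ ≤ V ‖x‖ * V (S * ‖c • (x - y)‖) := by
  have hyx : ‖y - x‖ ≤ S * ‖c • (x - y)‖ :=
    calc ‖y - x‖ = c⁻¹ * ‖c • (x - y)‖ := by
          rw [norm_smul, Real.norm_of_nonneg hc.le, inv_mul_cancel_left₀ hc.ne', norm_sub_rev]
      _ ≤ S * ‖c • (x - y)‖ := by gcongr
  calc V ‖y‖ ≤ V (‖x‖ + ‖y - x‖) := hVmono _ _ (norm_nonneg _) (norm_le_insert' y x)
    _ ≤ V ‖x‖ * V ‖y - x‖ := hVsub _ _ (norm_nonneg _) (norm_nonneg _)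
    _ ≤ V ‖x‖ * V (S * ‖c • (x - y)‖) :=
        mul_le_mul_of_nonneg_left (hVmono _ _ (norm_nonneg _) hyx) (hV0 _ (norm_nonneg _))

theorem integrable_mul_and_integral_mul_le_of_le_scaled [MeasurableSpace E] [BorelSpace E]
    [FiniteDimensional ℝ E] {μ : Measure E} [μ.IsAddHaarMeasure] [μ.IsNegInvariant]
    (hV0 : ∀ r, 0 ≤ r → 0 ≤ V r) (hVmono : ∀ r₁ r₂, 0 ≤ r₁ → r₁ ≤ r₂ → V r₁ ≤ V r₂)
    (hVsub : ∀ r₁ r₂, 0 ≤ r₁ → 0 ≤ r₂ → V (r₁ + r₂) ≤ V r₁ * V r₂)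
    {Q : E → ℝ} (hQ : ∀ z, 0 ≤ Q z) {S p : ℝ} (hp : 0 ≤ p)
    (hVpQ : Integrable (fun z => V (S * ‖z‖) ^ p * Q z) μ)
    {ρ ψ : E → ℝ} (hρ : Measurable ρ) (hρ0 : ∀ y, 0 ≤ ρ y) (hψ : Measurable ψ)
    (hψ0 : ∀ y, 0 ≤ ψ y) {x : E} {C c K : ℝ} (hC : 0 ≤ C) (hc : 0 < c) (hcS : c⁻¹ ≤ S)
    (hK : 0 ≤ K) (hρle : ∀ y, ρ y ≤ C * c ^ finrank ℝ E * Q (c • (x - y)))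
    (hψle : ∀ y, ψ y ≤ K * V ‖y‖ ^ p) :
    Integrable (fun y => ρ y * ψ y) μ ∧
      ∫ y, ρ y * ψ y ∂μ ≤ K * V ‖x‖ ^ p * (C * ∫ z, Q z * V (S * ‖z‖) ^ p ∂μ) := by
  have hS : 0 ≤ S := (inv_pos.2 hc).le.trans hcS
  set G : E → ℝ := fun z => Q z * V (S * ‖z‖) ^ p
  have hG : Integrable G μ := by simpa only [G, mul_comm] using hVpQ
  set B := K * V ‖x‖ ^ p * C
  have hdom : Integrable (fun y => B * (c ^ finrank ℝ E * G (c • (x - y)))) μ :=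
    ((hG.comp_smul_sub hc.ne' x).const_mul _).const_mul _
  have hle (y : E) : ρ y * ψ y ≤ B * (c ^ finrank ℝ E * G (c • (x - y))) := by
    have hψy : ψ y ≤ K * (V ‖x‖ ^ p * V (S * ‖c • (x - y)‖) ^ p) := by
      rw [← Real.mul_rpow (hV0 _ (norm_nonneg _)) (hV0 _ (mul_nonneg hS (norm_nonneg _)))]
      exact (hψle y).trans (mul_le_mul_of_nonneg_left (Real.rpow_le_rpow (hV0 _ (norm_nonneg _))
        (weight_norm_le_mul_weight_norm_smul_sub hV0 hVmono hVsub hc hcS x y) hp) hK)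
    calc ρ y * ψ y ≤ (C * c ^ finrank ℝ E * Q (c • (x - y))) *
          (K * (V ‖x‖ ^ p * V (S * ‖c • (x - y)‖) ^ p)) :=
          mul_le_mul (hρle y) hψy (hψ0 y) (mul_nonneg (by positivity) (hQ _))
      _ = B * (c ^ finrank ℝ E * G (c • (x - y))) := by ring
  have hint : Integrable (fun y => ρ y * ψ y) μ :=
    hdom.mono' (hρ.mul hψ).aestronglyMeasurable (ae_of_all _ fun y => by
      rw [Real.norm_of_nonneg (mul_nonneg (hρ0 y) (hψ0 y))]; exact hle y)
  refine ⟨hint, ?_⟩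
  calc ∫ y, ρ y * ψ y ∂μ ≤ ∫ y, B * (c ^ finrank ℝ E * G (c • (x - y))) ∂μ :=
        integral_mono hint hdom hle
    _ = B * ∫ z, G z ∂μ := by rw [integral_const_mul, integral_pow_finrank_mul_comp_smul_sub G hc x]
    _ = K * V ‖x‖ ^ p * (C * ∫ z, Q z * V (S * ‖z‖) ^ p ∂μ) := by ring

end ScaledKernel

section DensityTransfer

variable {Ω E : Type*} [MeasurableSpace Ω] [MeasurableSpace E] {μ : Measure Ω} {ν : Measure E}
  {Y : Ω → E} {ρ ψ : E → ℝ}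

lemma integrable_comp_iff_of_map_eq_withDensity (hY : Measurable Y) (hρ : Measurable ρ)
    (hρ0 : ∀ y, 0 ≤ ρ y) (hψ : Measurable ψ)
    (hmap : μ.map Y = ν.withDensity fun y => ENNReal.ofReal (ρ y)) :
    Integrable (fun ω => ψ (Y ω)) μ ↔ Integrable (fun y => ρ y * ψ y) ν := by
  rw [← Function.comp_def, ← integrable_map_measure hψ.aestronglyMeasurable hY.aemeasurable, hmap,
    integrable_withDensity_iff_integrable_smul' hρ.ennreal_ofReal
      (ae_of_all _ fun _ => ENNReal.ofReal_lt_top)]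
  simp only [ENNReal.toReal_ofReal (hρ0 _), smul_eq_mul]

lemma integral_comp_eq_of_map_eq_withDensity (hY : Measurable Y) (hρ : Measurable ρ)
    (hρ0 : ∀ y, 0 ≤ ρ y) (hψ : Measurable ψ)
    (hmap : μ.map Y = ν.withDensity fun y => ENNReal.ofReal (ρ y)) :
    ∫ ω, ψ (Y ω) ∂μ = ∫ y, ρ y * ψ y ∂ν := by
  rw [← integral_map hY.aemeasurable hψ.aestronglyMeasurable, hmap,
    integral_withDensity_eq_integral_toReal_smul hρ.ennreal_ofReal
      (ae_of_all _ fun _ => ENNReal.ofReal_lt_top)]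
  simp only [ENNReal.toReal_ofReal (hρ0 _), smul_eq_mul]

end DensityTransfer

theorem integrable_and_integral_comp_le_of_density_le {d : ℕ} {Ω : Type*} [MeasurableSpace Ω]
    {X : ℝ → Ω → EuclideanSpace ℝ (Fin d)} {μ : Measure Ω} [IsProbabilityMeasure μ]
    {x : EuclideanSpace ℝ (Fin d)} (hX : ∀ u, Measurable (X u)) (hX0 : ∀ᵐ ω ∂μ, X 0 ω = x)
    {T C α : ℝ} (hC : 0 ≤ C) (hα : 0 < α) {Q : EuclideanSpace ℝ (Fin d) → ℝ} (hQ : ∀ z, 0 ≤ Q z)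
    {ρ : ℝ → EuclideanSpace ℝ (Fin d) → ℝ} (hρ : ∀ u, Measurable (ρ u))
    (hρ0 : ∀ u y, 0 < u → 0 ≤ ρ u y)
    (hρle : ∀ u y, 0 < u → u ≤ T → ρ u y ≤ C * u ^ (-(d : ℝ) / α) * Q (u ^ (-1 / α) • (x - y)))
    (hdens : ∀ u, 0 < u → μ.map (X u) = volume.withDensity fun y => ENNReal.ofReal (ρ u y))
    {V : ℝ → ℝ} (hV0 : ∀ r, 0 ≤ r → 0 ≤ V r) (hVmono : ∀ r₁ r₂, 0 ≤ r₁ → r₁ ≤ r₂ → V r₁ ≤ V r₂)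
    (hVsub : ∀ r₁ r₂, 0 ≤ r₁ → 0 ≤ r₂ → V (r₁ + r₂) ≤ V r₁ * V r₂) {p : ℝ} (hp : 0 ≤ p)
    (hVpQ : Integrable (fun z => V (T ^ (1 / α) * ‖z‖) ^ p * Q z))
    {ψ : EuclideanSpace ℝ (Fin d) → ℝ} (hψ : Measurable ψ) (hψ0 : ∀ y, 0 ≤ ψ y) {K : ℝ}
    (hK : 0 ≤ K) (hψle : ∀ y, ψ y ≤ K * V ‖y‖ ^ p) {u : ℝ} (hu : 0 ≤ u) (huT : u ≤ T) :
    Integrable (fun ω => ψ (X u ω)) μ ∧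
      ∫ ω, ψ (X u ω) ∂μ ≤ K * V ‖x‖ ^ p * max 1 (C * ∫ z, Q z * V (T ^ (1 / α) * ‖z‖) ^ p) := by
  have hKV : 0 ≤ K * V ‖x‖ ^ p := mul_nonneg hK (Real.rpow_nonneg (hV0 _ (norm_nonneg _)) _)
  rcases hu.eq_or_lt with rfl | hu0
  · have hconst : (fun ω => ψ (X 0 ω)) =ᵐ[μ] fun _ => ψ x := hX0.mono fun ω hω => congrArg ψ hω
    refine ⟨(integrable_const _).congr hconst.symm, ?_⟩
    rw [integral_congr_ae hconst, integral_const, probReal_univ, one_smul]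
    exact (hψle x).trans (le_mul_of_one_le_right hKV (le_max_left _ _))
  · set c := u ^ (-1 / α)
    have hc : 0 < c := Real.rpow_pos_of_pos hu0 _
    have hcS : c⁻¹ ≤ T ^ (1 / α) := by
      rw [← Real.rpow_neg hu0.le, neg_div, neg_neg]
      exact Real.rpow_le_rpow hu0.le huT (by positivity)
    have hcd : u ^ (-(d : ℝ) / α) = c ^ finrank ℝ (EuclideanSpace ℝ (Fin d)) := by
      rw [finrank_euclideanSpace_fin, ← Real.rpow_natCast, ← Real.rpow_mul hu0.le]
      ring_nf
    obtain ⟨hint, hle⟩ := integrable_mul_and_integral_mul_le_of_le_scaled hV0 hVmono hVsub hQ hp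
      hVpQ (hρ u) (hρ0 u · hu0) hψ hψ0 hC hc hcS hK (fun y => hcd ▸ hρle u y hu0 huT) hψle
    refine ⟨(integrable_comp_iff_of_map_eq_withDensity (hX u) (hρ u) (hρ0 u · hu0) hψ
      (hdens u hu0)).2 hint, ?_⟩
    rw [integral_comp_eq_of_map_eq_withDensity (hX u) (hρ u) (hρ0 u · hu0) hψ (hdens u hu0)]
    exact hle.trans (mul_le_mul_of_nonneg_left (le_max_right _ _) hKV)

theorem statement_12_general
    {d : ℕ} {Ω : Type} [MeasurableSpace Ω]
    (X : ℝ → Ω → EuclideanSpace ℝ (Fin d))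
    (P : EuclideanSpace ℝ (Fin d) → Measure Ω)
    (hP : ∀ x, IsProbabilityMeasure (P x))
    (hXmeas : Measurable (Function.uncurry X))
    (hX0 : ∀ x, ∀ᵐ ω ∂ P x, X 0 ω = x)
    (T Cst α : ℝ) (hCst : 0 < Cst) (hα : α ∈ Set.Ioc (0:ℝ) 2)
    (Q : EuclideanSpace ℝ (Fin d) → ℝ)
    (hQnn : ∀ y, 0 ≤ Q y)
    (pt : ℝ → EuclideanSpace ℝ (Fin d) → EuclideanSpace ℝ (Fin d) → ℝ)
    (hptmeas : Measurable (fun q : ℝ × EuclideanSpace ℝ (Fin d) × EuclideanSpace ℝ (Fin d) => pt q.1 q.2.1 q.2.2))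
    (hptnn : ∀ t x y, 0 < t → 0 ≤ pt t x y)
    (hptbound : ∀ x y t, 0 < t → t ≤ T →
      pt t x y ≤ Cst * t ^ (-(d:ℝ)/α) * Q ((t ^ (-1/α)) • (x - y)))
    (hdens : ∀ x t, 0 < t →
      Measure.map (X t) (P x)
        = (volume : Measure (EuclideanSpace ℝ (Fin d))).withDensity
            (fun y => ENNReal.ofReal (pt t x y)))
    (V : ℝ → ℝ)
    (hV1 : ∀ r, 0 ≤ r → 1 ≤ V r)
    (hVmono : ∀ r₁ r₂, 0 ≤ r₁ → r₁ ≤ r₂ → V r₁ ≤ V r₂)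
    (hVsub : ∀ r₁ r₂, 0 ≤ r₁ → 0 ≤ r₂ → V (r₁ + r₂) ≤ V r₁ * V r₂)
    (h : EuclideanSpace ℝ (Fin d) → ℝ) (hhmeas : Measurable h)
    (Mh : ℝ) (hMh0 : 0 ≤ Mh) (hMh : ∀ y, |h y| ≤ Mh * V ‖y‖)
    (p : ℝ) (hp : 2 ≤ p)
    (hVpQ : Integrable (fun y : EuclideanSpace ℝ (Fin d) => (V (T ^ (1/α) * ‖y‖)) ^ p * Q y)) :
    ∀ (x : EuclideanSpace ℝ (Fin d)) (r s t : ℝ), 0 ≤ r → r ≤ s → s ≤ t → t ≤ T →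
      (∫ ω, |h (X s ω) - h (X r ω)| ^ (p/2) * |h (X t ω) - h (X r ω)| ^ (p/2) ∂ P x)
        ≤ (2:ℝ) ^ (p - 1) * Mh ^ p * (V ‖x‖) ^ p
            * max 1 (Cst * ∫ y, Q y * (V (T ^ (1/α) * ‖y‖)) ^ p) * 2 := by
  intro x r s t hr hrs hst htT
  have := hP x
  have hX (u : ℝ) : Measurable (X u) := hXmeas.comp measurable_prodMk_left
  have hV0 : ∀ r, 0 ≤ r → 0 ≤ V r := fun r hr => zero_le_one.trans (hV1 r hr)
  have hψle (y : EuclideanSpace ℝ (Fin d)) : |h y| ^ p ≤ Mh ^ p * V ‖y‖ ^ p :=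
    (Real.rpow_le_rpow (abs_nonneg _) (hMh y) (by linarith)).trans_eq
      (Real.mul_rpow hMh0 (hV0 _ (norm_nonneg _)))
  have moment (u : ℝ) (hu : 0 ≤ u) (huT : u ≤ T) :=
    integrable_and_integral_comp_le_of_density_le hX (hX0 x) hCst.le hα.1 hQnn
      (ρ := fun u y => pt u x y)
      (fun u => hptmeas.comp (measurable_const.prodMk (measurable_const.prodMk measurable_id)))
      (fun u y hu => hptnn u x y hu) (fun u y hu huT => hptbound x y u hu huT) (hdens x)
      hV0 hVmono hVsub (by linarith) hVpQ (hhmeas.abs.pow_const p) (fun y => by positivity)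
      (by positivity) hψle hu huT
  obtain ⟨hir, hIr⟩ := moment r hr (by linarith)
  obtain ⟨his, hIs⟩ := moment s (by linarith) (by linarith)
  obtain ⟨hit, hIt⟩ := moment t (by linarith) htT
  exact (integral_abs_sub_rpow_half_mul_le (by linarith) his hit hir hIs hIt hIr).trans_eq
    (by ring)

theorem statement_12
    {d : ℕ} {Ω : Type} [MeasurableSpace Ω]
    (X : ℝ → Ω → EuclideanSpace ℝ (Fin d))
    (P : EuclideanSpace ℝ (Fin d) → Measure Ω)
    (hP : ∀ x, IsProbabilityMeasure (P x))
    (hXmeas : Measurable (Function.uncurry X))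
    (hX0 : ∀ x, ∀ᵐ ω ∂ P x, X 0 ω = x)
    (T Cst α : ℝ) (hT : 0 < T) (hCst : 0 < Cst) (hα : α ∈ Set.Ioc (0:ℝ) 2)
    (Q : EuclideanSpace ℝ (Fin d) → ℝ)
    (hQmeas : Measurable Q) (hQnn : ∀ y, 0 ≤ Q y) (hQone : (∫ y, Q y) = 1)
    (pt pt' : ℝ → EuclideanSpace ℝ (Fin d) → EuclideanSpace ℝ (Fin d) → ℝ)
    (hptmeas : Measurable (fun q : ℝ × EuclideanSpace ℝ (Fin d) × EuclideanSpace ℝ (Fin d) => pt q.1 q.2.1 q.2.2))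
    (hpt'meas : Measurable (fun q : ℝ × EuclideanSpace ℝ (Fin d) × EuclideanSpace ℝ (Fin d) => pt' q.1 q.2.1 q.2.2))
    (hptnn : ∀ t x y, 0 < t → 0 ≤ pt t x y)
    (hptderiv : ∀ x y t, 0 < t → HasDerivAt (fun s => pt s x y) (pt' t x y) t)
    (hptbound : ∀ x y t, 0 < t → t ≤ T →
      pt t x y ≤ Cst * t ^ (-(d:ℝ)/α) * Q ((t ^ (-1/α)) • (x - y)))
    (hpt'bound : ∀ x y t, 0 < t → t ≤ T →
      |pt' t x y| ≤ Cst * t ^ (-1 - (d:ℝ)/α) * Q ((t ^ (-1/α)) • (x - y)))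
    (hdens : ∀ x t, 0 < t →
      Measure.map (X t) (P x)
        = (volume : Measure (EuclideanSpace ℝ (Fin d))).withDensity
            (fun y => ENNReal.ofReal (pt t x y)))
    (hMarkov : ∀ (x : EuclideanSpace ℝ (Fin d)) (u v : ℝ),
      ∀ g : EuclideanSpace ℝ (Fin d) → ℝ, Measurable g → (∃ M, ∀ y, |g y| ≤ M) →
      0 ≤ u → 0 < v →
      (P x)[(fun ω => g (X (u + v) ω)) | natFiltration X u]
        =ᵐ[P x] (fun ω => ∫ y, pt v (X u ω) y * g y))
    (V : ℝ → ℝ) (hVmeas : Measurable V)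
    (hV1 : ∀ r, 0 ≤ r → 1 ≤ V r)
    (hVmono : ∀ r₁ r₂, 0 ≤ r₁ → r₁ ≤ r₂ → V r₁ ≤ V r₂)
    (hVsub : ∀ r₁ r₂, 0 ≤ r₁ → 0 ≤ r₂ → V (r₁ + r₂) ≤ V r₁ * V r₂)
    (hVQint : ∀ S : ℝ, 0 ≤ S → Integrable (fun y : EuclideanSpace ℝ (Fin d) => V (S * ‖y‖) * Q y))
    (h : EuclideanSpace ℝ (Fin d) → ℝ) (hhmeas : Measurable h)
    (Mh : ℝ) (hMh0 : 0 ≤ Mh) (hMh : ∀ y, |h y| ≤ Mh * V ‖y‖)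
    (p : ℝ) (hp : 2 ≤ p)
    (hVpQ : Integrable (fun y : EuclideanSpace ℝ (Fin d) => (V (T ^ (1/α) * ‖y‖)) ^ p * Q y)) :
    ∀ (x : EuclideanSpace ℝ (Fin d)) (r s t : ℝ), 0 ≤ r → r ≤ s → s ≤ t → t ≤ T →
      (∫ ω, |h (X s ω) - h (X r ω)| ^ (p/2) * |h (X t ω) - h (X r ω)| ^ (p/2) ∂ P x)
        ≤ (2:ℝ) ^ (p - 1) * Mh ^ p * (V ‖x‖) ^ p
            * max 1 (Cst * ∫ y, Q y * (V (T ^ (1/α) * ‖y‖)) ^ p) * 2 :=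
  statement_12_general X P hP hXmeas hX0 T Cst α hCst hα Q hQnn pt hptmeas hptnn hptbound hdens V
    hV1 hVmono hVsub h hhmeas Mh hMh0 hMh p hp hVpQ
end
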